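/- Let p be a prime with p ≡ 1 (mod 4) and let q be a prime with q ≡ 3 (mod 4) such that q is not a quadratic residue modulo p. Then for every prime ℓ ≠ p (including ℓ = q and ℓ = 2), the quaternion algebra ℍ[ℚ_ℓ, −q, −p] splits: there exists an isomorphism of ℚ_ℓ-algebras ℍ[ℚ_ℓ, −q, −p] ≅ M₂(ℚ_ℓ). -/

import Mathlib

/-!
`ℍ[F, a, b]` splits as soon as `b = u² - a v²` for some `u, v ∈ F`: then
`i ↦ !![0, a; 1, 0]`, `j ↦ !![u, -a v; v, -u]` satisfy the quaternion relations, and the induced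
map to `M₂(F)` is injective, hence bijective by dimension count. So it suffices to solve
`u² + q v² = -p` in `ℚ_ℓ`, and Hensel's lemma reduces this to congruences.
* For `ℓ ∤ 2pq`, the conic `x² + q y² = -p` has a point mod `ℓ` (pigeonhole), which lifts.
* For `ℓ = q`, `-p` is a square mod `q`: `-1` is not (as `q ≡ 3 mod 4`), and neither is `p`, by
  quadratic reciprocity (`p ≡ 1 mod 4` and `q` is not a square mod `p`).
* For `ℓ = 2`, choosing `u ∈ {0, 2}` according to `p + q mod 8` makes `q (-p - u²) ≡ 1 mod 8`,
  a `2`-adic square, and `v` is read off its square root.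
-/

open Quaternion

namespace QuaternionAlgebra

variable {F : Type*} [Field F] {a b u v : F}

def matrixBasis (h : u ^ 2 - a * v ^ 2 = b) : Basis (Matrix (Fin 2) (Fin 2) F) a 0 b where
  i := !![0, a; 1, 0]
  j := !![u, -(a * v); v, -u]
  k := !![a * v, -(a * u); u, -(a * v)]
  i_mul_i := by ext i j; fin_cases i <;> fin_cases j <;> simp
  j_mul_j := by subst h; ext i j; fin_cases i <;> fin_cases j <;> simp <;> ring
  i_mul_j := by ext i j; fin_cases i <;> fin_cases j <;> simp
  j_mul_i := by ext i j; fin_cases i <;> fin_cases j <;> simp <;> ring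

theorem matrixBasis_liftHom_apply (h : u ^ 2 - a * v ^ 2 = b) (x : ℍ[F,a,b]) :
    (matrixBasis h).liftHom x =
      !![x.re + u * x.imJ + a * v * x.imK, a * (x.imI - v * x.imJ - u * x.imK);
        x.imI + v * x.imJ + u * x.imK, x.re - u * x.imJ - a * v * x.imK] := by
  ext i j; fin_cases i <;> fin_cases j <;>
    simp [matrixBasis, Basis.lift, Matrix.algebraMap_matrix_apply] <;> ring

theorem injective_liftHom_matrixBasis [NeZero (2 : F)] (ha : a ≠ 0) (hb : b ≠ 0)
    (h : u ^ 2 - a * v ^ 2 = b) : Function.Injective (matrixBasis h).liftHom := by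
  rw [injective_iff_map_eq_zero]
  intro x hx
  rw [matrixBasis_liftHom_apply, ← Matrix.ext_iff] at hx
  have e00 := hx 0 0
  have e01 := hx 0 1
  have e10 := hx 1 0
  have e11 := hx 1 1
  simp only [Matrix.of_apply, Matrix.cons_val', Matrix.cons_val_zero, Matrix.cons_val_one,
    Matrix.empty_val', Matrix.cons_val_fin_one, Matrix.zero_apply, mul_eq_zero, ha, false_or]
    at e00 e01 e10 e11
  have hre : (2 : F) * x.re = 0 := by linear_combination e00 + e11
  have himI : (2 : F) * x.imI = 0 := by linear_combination e01 + e10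
  simp only [mul_eq_zero, two_ne_zero, false_or] at hre himI
  have himJ : b * x.imJ = 0 := by
    linear_combination u * e00 - a * v * e10 - u * hre + a * v * himI - x.imJ * h
  have himK : b * x.imK = 0 := by
    linear_combination u * e10 - v * e00 - u * himI + v * hre - x.imK * h
  simp only [mul_eq_zero, hb, false_or] at himJ himK
  ext <;> simp [hre, himI, himJ, himK]

theorem nonempty_algEquiv_matrix_of_sq_sub_mul_sq_eq [NeZero (2 : F)] (ha : a ≠ 0) (hb : b ≠ 0)
    (h : u ^ 2 - a * v ^ 2 = b) : Nonempty (ℍ[F,a,b] ≃ₐ[F] Matrix (Fin 2) (Fin 2) F) := by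
  have hinj := injective_liftHom_matrixBasis ha hb h
  have hrank : Module.finrank F ℍ[F,a,b] = Module.finrank F (Matrix (Fin 2) (Fin 2) F) := by
    simp [QuaternionAlgebra.finrank_eq_four, Module.finrank_matrix]
  exact ⟨.ofBijective _ ⟨hinj, (LinearMap.injective_iff_surjective_of_finrank_eq_finrank
    (f := (matrixBasis h).liftHom.toLinearMap) hrank).mp hinj⟩⟩

end QuaternionAlgebra

theorem exists_sq_sub_mul_sq_eq_of_isSquare_neg_mul {F : Type*} [Field F] {a b : F} (u : F)
    (ha : a ≠ 0) (h : IsSquare (-a * (b - u ^ 2))) : ∃ v, u ^ 2 - a * v ^ 2 = b := by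
  obtain ⟨s, hs⟩ := h
  refine ⟨s / a, ?_⟩
  field_simp
  linear_combination hs

namespace FiniteField

variable {K : Type*} [Field K] [Fintype K]

theorem isSquare_mul_of_not_isSquare {x y : K} (hx : ¬IsSquare x) (hy : ¬IsSquare y) :
    IsSquare (x * y) := by
  classical
  have hxy : x * y ≠ 0 := mul_ne_zero (by rintro rfl; exact hx ⟨0, by simp⟩)
    (by rintro rfl; exact hy ⟨0, by simp⟩)
  rw [← quadraticChar_one_iff_isSquare hxy, map_mul,
    quadraticChar_neg_one_iff_not_isSquare.mpr hx, quadraticChar_neg_one_iff_not_isSquare.mpr hy]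
  norm_num

open Polynomial in
theorem exists_sq_sub_mul_sq_eq (hK : ringChar K ≠ 2) {c : K} (hc : c ≠ 0) (d : K) :
    ∃ x y : K, x ^ 2 - c * y ^ 2 = d := by
  obtain ⟨x, y, hxy⟩ := exists_root_sum_quadratic (f := X ^ 2) (g := -(C c * X ^ 2) - C d)
    (by compute_degree!) (by compute_degree!) (odd_card_of_char_ne_two hK)
  refine ⟨x, y, ?_⟩
  simp only [eval_pow, eval_X, eval_sub, eval_neg, eval_mul, eval_C] at hxy
  linear_combination hxy

end FiniteField

namespace PadicInt

variable {ℓ : ℕ} [Fact ℓ.Prime]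

theorem isSquare_coe {x : ℤ_[ℓ]} (h : IsSquare x) : IsSquare (x : ℚ_[ℓ]) := by
  obtain ⟨r, rfl⟩ := h
  exact ⟨r, coe_mul r r⟩

theorem isUnit_natCast_of_prime_ne {n : ℕ} (hn : n.Prime) (h : ℓ ≠ n) :
    IsUnit (n : ℤ_[ℓ]) :=
  isUnit_iff.mpr (norm_natCast_eq_one_iff.mpr ((Nat.coprime_primes Fact.out hn).mpr h))

theorem isUnit_iff_toZMod_ne_zero {z : ℤ_[ℓ]} : IsUnit z ↔ toZMod z ≠ 0 :=
  ⟨fun h ↦ (h.map toZMod).ne_zero,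
    fun h ↦ isUnit_of_map_unit toZMod z (isUnit_iff_ne_zero.mpr h)⟩

theorem norm_lt_one_iff_toZMod_eq_zero {z : ℤ_[ℓ]} : ‖z‖ < 1 ↔ toZMod z = 0 := by
  rw [← not_ne_iff, ← isUnit_iff_toZMod_ne_zero, isUnit_iff, (norm_le_one z).lt_iff_ne]

open Polynomial in
theorem isSquare_of_norm_sq_sub_lt {a t : ℤ_[ℓ]} (h : ‖t ^ 2 - a‖ < ‖2 * t‖ ^ 2) :
    IsSquare a := by
  have hF (z : ℤ_[ℓ]) : aeval z (X ^ 2 - C a) = z ^ 2 - a := by simp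
  have hF' : aeval t (derivative (X ^ 2 - C a)) = 2 * t := by
    simp [one_add_one_eq_two]
  obtain ⟨z, hz, -⟩ := hensels_lemma (by rwa [hF, hF'])
  have hz' : z ^ 2 - a = 0 := by rwa [hF] at hz
  exact ⟨z, by rw [← sq, sub_eq_zero.mp hz']⟩

theorem isSquare_of_isSquare_toZMod (hℓ : ℓ ≠ 2) {a : ℤ_[ℓ]} (ha : IsUnit a)
    (h : IsSquare (toZMod a)) : IsSquare a := by
  obtain ⟨r, hr⟩ := h
  obtain ⟨t, rfl⟩ := ZMod.ringHom_surjective toZMod r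
  refine isSquare_of_norm_sq_sub_lt (t := t) ?_
  have h2t : IsUnit (2 * t) := by
    have ht : toZMod t ≠ 0 := fun ht ↦
      isUnit_iff_toZMod_ne_zero.mp ha (by rw [hr, ht, zero_mul])
    rw [isUnit_iff_toZMod_ne_zero, map_mul, map_ofNat]
    exact mul_ne_zero (Ring.two_ne_zero (by rwa [ZMod.ringChar_zmod_n])) ht
  rw [isUnit_iff.mp h2t, one_pow, norm_lt_one_iff_toZMod_eq_zero, map_sub, map_pow, hr, sq,
    sub_self]

theorem isSquare_of_eight_dvd_sub_one {a : ℤ_[2]} (h : 8 ∣ a - 1) : IsSquare a := by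
  refine isSquare_of_norm_sq_sub_lt (t := 1) ?_
  obtain ⟨c, hc⟩ := h
  have h2 : ‖(2 : ℤ_[2])‖ = 2⁻¹ := by simpa using norm_p (p := 2)
  calc ‖1 ^ 2 - a‖ = ‖(2 : ℤ_[2])‖ ^ 3 * ‖c‖ := by
        rw [one_pow, ← norm_neg, neg_sub, hc, norm_mul, ← norm_pow]; norm_num
    _ ≤ ‖(2 : ℤ_[2])‖ ^ 3 := mul_le_of_le_one_right (by positivity) (norm_le_one c)
    _ < ‖2 * (1 : ℤ_[2])‖ ^ 2 := by rw [mul_one, h2]; norm_num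

end PadicInt

namespace Padic

variable {ℓ : ℕ} [Fact ℓ.Prime]

theorem exists_sq_sub_mul_sq_eq_of_isUnit (hℓ : ℓ ≠ 2) {a b : ℤ_[ℓ]} (ha : IsUnit a)
    (hb : IsUnit b) : ∃ u v : ℚ_[ℓ], u ^ 2 - a * v ^ 2 = b := by
  obtain ⟨x, y, hxy⟩ := FiniteField.exists_sq_sub_mul_sq_eq (by rwa [ZMod.ringChar_zmod_n])
    (PadicInt.isUnit_iff_toZMod_ne_zero.mp ha) (PadicInt.toZMod b)
  obtain ⟨t, rfl⟩ := ZMod.ringHom_surjective PadicInt.toZMod y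
  by_cases hx : x = 0
  · have hsq : IsSquare (-a * b) := by
      refine PadicInt.isSquare_of_isSquare_toZMod hℓ (ha.neg.mul hb)
        ⟨PadicInt.toZMod (a * t), ?_⟩
      simp only [map_mul, map_neg]
      rw [← hxy, hx]
      ring
    obtain ⟨v, hv⟩ := exists_sq_sub_mul_sq_eq_of_isSquare_neg_mul 0
      (PadicInt.coe_ne_zero.mpr ha.ne_zero) (by simpa using PadicInt.isSquare_coe hsq)
    exact ⟨0, v, hv⟩
  · have hunit : IsUnit (b + a * t ^ 2) := by
      rw [PadicInt.isUnit_iff_toZMod_ne_zero, map_add, map_mul, map_pow, ← hxy]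
      simpa using hx
    obtain ⟨s, hs⟩ := PadicInt.isSquare_coe (PadicInt.isSquare_of_isSquare_toZMod hℓ hunit
      ⟨x, by rw [map_add, map_mul, map_pow, ← hxy]; ring⟩)
    refine ⟨s, t, ?_⟩
    push_cast at hs
    linear_combination -hs

end Padic

theorem padicTwo_exists_sq_add_mul_sq_eq_neg {p q : ℕ} (hp1 : p % 4 = 1) (hq3 : q % 4 = 3) :
    ∃ u v : ℚ_[2], u ^ 2 + q * v ^ 2 = -p := by
  obtain ⟨u, hu⟩ : ∃ u : ℤ, ((q * (-p - u ^ 2) - 1 : ℤ) : ZMod 8) = 0 := by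
    have hp8 : p % 8 = 1 ∨ p % 8 = 5 := by omega
    have hq8 : q % 8 = 3 ∨ q % 8 = 7 := by omega
    push_cast
    rw [← ZMod.natCast_mod p 8, ← ZMod.natCast_mod q 8]
    rcases hp8 with hp8 | hp8 <;> rcases hq8 with hq8 | hq8 <;> rw [hp8, hq8]
    exacts [⟨2, by decide⟩, ⟨0, by decide⟩, ⟨0, by decide⟩, ⟨2, by decide⟩]
  have h8 : (8 : ℤ_[2]) ∣ ((q * (-p - u ^ 2) : ℤ) : ℤ_[2]) - 1 := by
    have := Int.cast_dvd_cast (α := ℤ_[2]) _ _ ((ZMod.intCast_zmod_eq_zero_iff_dvd _ 8).mp hu)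
    push_cast at this ⊢
    exact this
  have hsq := PadicInt.isSquare_coe (PadicInt.isSquare_of_eight_dvd_sub_one h8)
  have hq0 : (q : ℚ_[2]) ≠ 0 := Nat.cast_ne_zero.mpr (by omega)
  obtain ⟨v, hv⟩ := exists_sq_sub_mul_sq_eq_of_isSquare_neg_mul (u : ℚ_[2])
    (neg_ne_zero.mpr hq0) (b := -(p : ℚ_[2])) (by push_cast at hsq; simpa using hsq)
  exact ⟨u, v, by linear_combination hv⟩

theorem padic_exists_sq_add_mul_sq_eq_neg_of_not_isSquare {p q : ℕ} [Fact q.Prime]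
    (hp : p.Prime) (hp1 : p % 4 = 1) (hq3 : q % 4 = 3) (hqr : ¬IsSquare (q : ZMod p))
    (hqp : q ≠ p) : ∃ u v : ℚ_[q], u ^ 2 + q * v ^ 2 = -p := by
  have := Fact.mk hp
  have hq2 : q ≠ 2 := by omega
  have hp_nsq : ¬IsSquare (p : ZMod q) :=
    (ZMod.exists_sq_eq_prime_iff_of_mod_four_eq_one hp1 hq2).not.mp hqr
  have hneg_one : ¬IsSquare (-1 : ZMod q) := by rw [ZMod.exists_sq_eq_neg_one_iff]; omega
  have hsq : IsSquare (-(p : ℤ_[q])) :=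
    PadicInt.isSquare_of_isSquare_toZMod hq2 (PadicInt.isUnit_natCast_of_prime_ne hp hqp).neg
      (by simpa using FiniteField.isSquare_mul_of_not_isSquare hneg_one hp_nsq)
  obtain ⟨s, hs⟩ := PadicInt.isSquare_coe hsq
  exact ⟨s, 0, by simpa [sq] using hs.symm⟩

/-- Let `p ≡ 1 (mod 4)` and `q ≡ 3 (mod 4)` be primes such that `q` is not a quadratic
residue mod `p`. Then for every prime `ℓ ≠ p` (including `ℓ = q` and `ℓ = 2`), the
quaternion algebra `ℍ[ℚ_ℓ, −q, −p]` splits: `ℍ[ℚ_ℓ, −q, −p] ≅ M₂(ℚ_ℓ)` as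
`ℚ_ℓ`-algebras. -/
theorem quaternionAlgebra_padic_neg_q_neg_p_splits (p q : ℕ) (hp : p.Prime)
    (hq : q.Prime) (hp1 : p % 4 = 1) (hq3 : q % 4 = 3)
    (hqr : ¬ IsSquare (q : ZMod p)) (ℓ : ℕ) [Fact ℓ.Prime] (hℓ : ℓ ≠ p) :
    Nonempty (ℍ[ℚ_[ℓ], -(q : ℚ_[ℓ]), -(p : ℚ_[ℓ])] ≃ₐ[ℚ_[ℓ]]
      Matrix (Fin 2) (Fin 2) ℚ_[ℓ]) := by
  suffices ∃ u v : ℚ_[ℓ], u ^ 2 + q * v ^ 2 = -p by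
    obtain ⟨u, v, h⟩ := this
    exact QuaternionAlgebra.nonempty_algEquiv_matrix_of_sq_sub_mul_sq_eq (u := u) (v := v)
      (neg_ne_zero.mpr (Nat.cast_ne_zero.mpr hq.ne_zero))
      (neg_ne_zero.mpr (Nat.cast_ne_zero.mpr hp.ne_zero)) (by linear_combination h)
  rcases eq_or_ne ℓ 2 with rfl | hℓ2
  · exact padicTwo_exists_sq_add_mul_sq_eq_neg hp1 hq3
  rcases eq_or_ne ℓ q with rfl | hℓq
  · exact padic_exists_sq_add_mul_sq_eq_neg_of_not_isSquare hp hp1 hq3 hqr hℓ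
  simpa using Padic.exists_sq_sub_mul_sq_eq_of_isUnit hℓ2
    (PadicInt.isUnit_natCast_of_prime_ne hq hℓq).neg
    (PadicInt.isUnit_natCast_of_prime_ne hp hℓ).neg
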